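/- In QLP extended with a fixed point constant δ and the axiom δ ↔ [E ∧ ¬(∃x)x:(δ → E)] for a propositional letter E (and F = ∅), the formula ¬δ is derivable. -/

import Mathlib

/-- Justification terms of Fitting's quantified logic of proofs QLP:
variables, primitive terms `f(x₁,…,xₙ)` (a function symbol applied to
justification variables), application `·`, sum `+`, proof checker `!`, and
the uniform verifier `(t ∀ x)` (which binds `x`). -/
inductive Tm : Type
  | var : ℕ → Tm
  | prim : ℕ → List ℕ → Tm
  | app : Tm → Tm → Tm
  | sum : Tm → Tm → Tm
  | bang : Tm → Tm
  | uall : Tm → ℕ → Tm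

/-- Free justification variables of a term. -/
def Tm.fv : Tm → Finset ℕ
  | .var x => {x}
  | .prim _ xs => xs.toFinset
  | .app s t => s.fv ∪ t.fv
  | .sum s t => s.fv ∪ t.fv
  | .bang t => t.fv
  | .uall t x => t.fv.erase x

/-- Substitution of a term for a justification variable in a term. -/
def Tm.substT (s : Tm) (x : ℕ) : Tm → Tm
  | .var y => if y = x then s else .var y
  | .prim f xs => .prim f xs
  | .app a b => .app (Tm.substT s x a) (Tm.substT s x b)
  | .sum a b => .sum (Tm.substT s x a) (Tm.substT s x b)
  | .bang a => .bang (Tm.substT s x a)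
  | .uall a y => if y = x then .uall a y else .uall (Tm.substT s x a) y

/-- `FreeForT s x t`: the term `s` is substitutable ("free for") the variable
`x` in the term `t` (no variable of `s` gets captured, and `x` does not occur
inside a primitive term). -/
def FreeForT (s : Tm) (x : ℕ) : Tm → Prop
  | .var _ => True
  | .prim _ xs => x ∉ xs
  | .app a b => FreeForT s x a ∧ FreeForT s x b
  | .sum a b => FreeForT s x a ∧ FreeForT s x b
  | .bang a => FreeForT s x a
  | .uall a y => x ∈ Tm.fv (.uall a y) → (y ∉ s.fv ∧ FreeForT s x a)

/-- Formulas of QLP, with quantifiers over justification variables. -/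
inductive Fm : Type
  | atom : ℕ → Fm
  | delta : Fm
  | bot : Fm
  | imp : Fm → Fm → Fm
  | just : Tm → Fm → Fm
  | all : ℕ → Fm → Fm
  | ex : ℕ → Fm → Fm

namespace Fm

def neg (A : Fm) : Fm := imp A bot
def disj (A B : Fm) : Fm := imp (neg A) B
def conj (A B : Fm) : Fm := neg (imp A (neg B))
def iff' (A B : Fm) : Fm := conj (imp A B) (imp B A)
/-- Exclusive disjunction. -/
def xor' (A B : Fm) : Fm := conj (disj A B) (neg (conj A B))

/-- Free justification variables of a formula. -/
def fv : Fm → Finset ℕ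
  | atom _ => ∅
  | delta => ∅
  | bot => ∅
  | imp A B => A.fv ∪ B.fv
  | just t A => t.fv ∪ A.fv
  | all x A => A.fv.erase x
  | ex x A => A.fv.erase x

/-- Substitution of a term for a justification variable in a formula. -/
def subst (s : Tm) (x : ℕ) : Fm → Fm
  | atom p => atom p
  | delta => delta
  | bot => bot
  | imp A B => imp (A.subst s x) (B.subst s x)
  | just t A => just (Tm.substT s x t) (A.subst s x)
  | all y A => if y = x then all y A else all y (A.subst s x)
  | ex y A => if y = x then ex y A else ex y (A.subst s x)

end Fm

/-- `FreeFor s x A`: the term `s` is substitutable for the variable `x` in the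
formula `A`. -/
def FreeFor (s : Tm) (x : ℕ) : Fm → Prop
  | .atom _ => True
  | .delta => True
  | .bot => True
  | .imp A B => FreeFor s x A ∧ FreeFor s x B
  | .just t A => FreeForT s x t ∧ FreeFor s x A
  | .all y A => x ∈ Fm.fv (.all y A) → (y ∉ s.fv ∧ FreeFor s x A)
  | .ex y A => x ∈ Fm.fv (.ex y A) → (y ∉ s.fv ∧ FreeFor s x A)

open Fm

/-- Provability in Fitting's quantified logic of proofs QLP, extended by the
fixed point axiom `fpAx` and with axiom necessitation restricted to the
primitive term specification `F`. Axioms: propositional tautologies (via a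
Hilbert basis), quantifier axioms Q1–Q4, jK, jT, j4, Sum, and the uniformity
formula UF; rules: modus ponens MP, generalization Gen, axiom necessitation AN,
and quantified necessitation qNec. -/
inductive Prov (F : Fm → Prop) (fpAx : Fm) : Fm → Prop
  | ax1 (A B : Fm) : Prov F fpAx (imp A (imp B A))
  | ax2 (A B C : Fm) : Prov F fpAx (imp (imp A (imp B C)) (imp (imp A B) (imp A C)))
  | ax3 (A B : Fm) : Prov F fpAx (imp (imp (neg A) (neg B)) (imp B A))
  | q1 {t : Tm} {x : ℕ} {A : Fm} (h : FreeFor t x A) :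
      Prov F fpAx (imp (all x A) (A.subst t x))
  | q2 {x : ℕ} {A B : Fm} (h : x ∉ A.fv) :
      Prov F fpAx (imp (all x (imp A B)) (imp A (all x B)))
  | q3 {t : Tm} {x : ℕ} {A : Fm} (h : FreeFor t x A) :
      Prov F fpAx (imp (A.subst t x) (ex x A))
  | q4 {x : ℕ} {A B : Fm} (h : x ∉ B.fv) :
      Prov F fpAx (imp (all x (imp A B)) (imp (ex x A) B))
  | jk (s t : Tm) (A B : Fm) :
      Prov F fpAx (imp (just s (imp A B)) (imp (just t A) (just (.app s t) B)))
  | jt (t : Tm) (A : Fm) : Prov F fpAx (imp (just t A) A)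
  | j4 (t : Tm) (A : Fm) :
      Prov F fpAx (imp (just t A) (just (.bang t) (just t A)))
  | sum1 (s t : Tm) (A : Fm) : Prov F fpAx (imp (just s A) (just (.sum s t) A))
  | sum2 (s t : Tm) (A : Fm) : Prov F fpAx (imp (just s A) (just (.sum t s) A))
  | uf {y : ℕ} {t : Tm} {x : ℕ} {A : Fm} (hy1 : y ∉ t.fv) (hy2 : y ∉ A.fv) :
      Prov F fpAx (imp (ex y (just (.var y) (all x (just t A))))
        (just (.uall t x) (all x A)))
  | an {A : Fm} : F A → Prov F fpAx A
  | fp : Prov F fpAx fpAx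
  | mp {A B : Fm} : Prov F fpAx (imp A B) → Prov F fpAx A → Prov F fpAx B
  | gen {A : Fm} (x : ℕ) : Prov F fpAx A → Prov F fpAx (all x A)
  | qnec {x : ℕ} {A : Fm} (h : x ∉ A.fv) :
      Prov F fpAx A → Prov F fpAx (ex x (just (.var x) A))

theorem Prov.imp_self {F : Fm → Prop} {fpAx : Fm} (A : Fm) : Prov F fpAx (imp A A) :=
  mp (mp (ax2 A (imp A A) A) (ax1 A (imp A A))) (ax1 A A)

/-- Derivability in `Prov F fpAx` from a list of extra hypotheses, to which no
generalization or necessitation is applied. -/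
inductive ProvFrom (F : Fm → Prop) (fpAx : Fm) (Γ : List Fm) : Fm → Prop
  | hyp {A : Fm} : A ∈ Γ → ProvFrom F fpAx Γ A
  | prov {A : Fm} : Prov F fpAx A → ProvFrom F fpAx Γ A
  | mp {A B : Fm} : ProvFrom F fpAx Γ (imp A B) → ProvFrom F fpAx Γ A → ProvFrom F fpAx Γ B

namespace ProvFrom

variable {F : Fm → Prop} {fpAx : Fm} {Γ : List Fm}

theorem imp_intro {A B : Fm} (h : ProvFrom F fpAx (A :: Γ) B) : ProvFrom F fpAx Γ (imp A B) := by
  induction h with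
  | hyp hB =>
    rcases List.mem_cons.1 hB with rfl | hB
    · exact prov (Prov.imp_self _)
    · exact mp (prov (Prov.ax1 _ _)) (hyp hB)
  | prov hB => exact mp (prov (Prov.ax1 _ _)) (prov hB)
  | mp _ _ ihAB ihA => exact mp (mp (prov (Prov.ax2 _ _ _)) ihAB) ihA

theorem prov_of_nil {A : Fm} (h : ProvFrom F fpAx [] A) : Prov F fpAx A := by
  induction h with
  | hyp hA => simp at hA
  | prov hA => exact hA
  | mp _ _ ihAB ihA => exact Prov.mp ihAB ihA

theorem head {A : Fm} : ProvFrom F fpAx (A :: Γ) A := hyp List.mem_cons_self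

theorem bot_elim {A : Fm} (h : ProvFrom F fpAx Γ bot) : ProvFrom F fpAx Γ A :=
  mp (mp (prov (Prov.ax3 A bot)) (mp (prov (Prov.ax1 _ _)) (prov (Prov.imp_self bot)))) h

theorem by_contra {A : Fm} (h : ProvFrom F fpAx (neg A :: Γ) bot) : ProvFrom F fpAx Γ A :=
  mp (mp (prov (Prov.ax3 A (imp bot bot))) (imp_intro (bot_elim h))) (prov (Prov.imp_self bot))

end ProvFrom

namespace Prov

open ProvFrom

variable {F : Fm → Prop} {fpAx : Fm}

theorem conj_imp_left (A B : Fm) : Prov F fpAx (imp (conj A B) A) := by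
  refine prov_of_nil <| imp_intro <| ProvFrom.by_contra ?_
  have hAB : ProvFrom F fpAx [neg A, conj A B] (neg (imp A (neg B))) := hyp (by simp [conj])
  have hnA : ProvFrom F fpAx [A, neg A, conj A B] (neg A) := hyp (by simp)
  exact ProvFrom.mp hAB (imp_intro (bot_elim (ProvFrom.mp hnA head)))

theorem conj_imp_right (A B : Fm) : Prov F fpAx (imp (conj A B) B) := by
  refine prov_of_nil <| imp_intro <| ProvFrom.by_contra ?_
  have hAB : ProvFrom F fpAx [neg B, conj A B] (neg (imp A (neg B))) := hyp (by simp [conj])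
  exact ProvFrom.mp hAB (ProvFrom.mp (prov (ax1 _ _)) head)

theorem imp_trans {A B C : Fm} (hAB : Prov F fpAx (imp A B)) (hBC : Prov F fpAx (imp B C)) :
    Prov F fpAx (imp A C) :=
  prov_of_nil <| imp_intro <| ProvFrom.mp (prov hBC) (ProvFrom.mp (prov hAB) head)

theorem imp_of_imp_imp {A B C : Fm} (hABC : Prov F fpAx (imp A (imp B C)))
    (hB : Prov F fpAx B) : Prov F fpAx (imp A C) :=
  prov_of_nil <| imp_intro <| ProvFrom.mp (ProvFrom.mp (prov hABC) head) (prov hB)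

end Prov

/-- The announcement gives `δ → E`, which qNec turns into a proof of
`(∃x)x:(δ → E)`; but the announcement also gives `δ → ¬(∃x)x:(δ → E)`. -/
theorem qlp_surprise_one_day (e : ℕ) :
    Prov (fun _ => False)
      (iff' delta (conj (atom e) (neg (ex 0 (just (.var 0) (imp delta (atom e)))))))
      (neg delta) := by
  set knownE := ex 0 (just (.var 0) (imp delta (atom e)))
  have hδ : Prov (fun _ => False) (iff' delta (conj (atom e) (neg knownE)))
      (imp delta (conj (atom e) (neg knownE))) :=
    .mp (.conj_imp_left _ _) .fp
  have hδE := hδ.imp_trans (.conj_imp_left _ _)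
  have hknownE : Prov _ _ knownE := .qnec (by simp [Fm.fv]) hδE
  exact (hδ.imp_trans (.conj_imp_right _ _)).imp_of_imp_imp hknownE
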